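/- For every s ∈ ℝ, the function σ ↦ ℌ(σ) − σ·s attains a unique minimum over the open interval (σ₋, σ₊), and the minimizer is σ* = σ̄ + σ̂·tanh(σ̂·s/δ). -/

import Mathlib

/-!
With `a = σ - σ₋` and `b = σ₊ - σ`, the penalty is `δ / (2σ̂)` times
`a log (a/σ̂) + b log (b/σ̂)` on the line `a + b = 2σ̂`. Gibbs' inequality
`a - a' < a log (a/a')` shows that this function lies strictly above each of its tangent lines,
whose slope at `σ` is `(δ / (2σ̂)) log (a/b)`. At `σ* = σ̄ + σ̂ tanh x` with `x = σ̂ s/δ` we have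
`a/b = (1 + tanh x)/(1 - tanh x) = exp (2x)`, so the slope there is exactly `s`; hence `σ*` is
the strict global minimizer of `ℌ(σ) - σ s`.
-/

open Real

namespace Real

theorem sub_lt_mul_log_div {a b : ℝ} (ha : 0 < a) (hb : 0 < b) (hab : a ≠ b) :
    a - b < a * log (a / b) := by
  have h := log_lt_sub_one_of_pos (div_pos hb ha)
    (by rwa [ne_eq, div_eq_one_iff_eq ha.ne', eq_comm])
  have h' := mul_lt_mul_of_pos_left h ha
  rw [mul_sub, mul_div_cancel₀ _ ha.ne', mul_one, ← inv_div, log_inv] at h'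
  linarith

theorem mul_log_add_mul_log_tangent_lt {a b a' b' c : ℝ} (ha : 0 < a) (hb : 0 < b)
    (ha' : 0 < a') (hb' : 0 < b') (hc : c ≠ 0) (hsum : a + b = a' + b') (hne : a ≠ a') :
    a' * log (a' / c) + b' * log (b' / c) + (a - a') * log (a' / b') <
      a * log (a / c) + b * log (b / c) := by
  have hA := sub_lt_mul_log_div ha ha' hne
  have hB := sub_lt_mul_log_div hb hb' (by contrapose! hne; linarith)
  rw [log_div ha.ne' ha'.ne'] at hA
  rw [log_div hb.ne' hb'.ne'] at hB
  rw [log_div ha.ne' hc, log_div hb.ne' hc, log_div ha'.ne' hc, log_div hb'.ne' hc,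
    log_div ha'.ne' hb'.ne']
  linear_combination hA + hB + (log c - log b' - 1) * hsum

theorem log_one_add_tanh_div_one_sub_tanh (x : ℝ) :
    log ((1 + tanh x) / (1 - tanh x)) = 2 * x := by
  have h := artanh_eq_half_log ⟨(neg_one_lt_tanh x).le, (tanh_lt_one x).le⟩
  rw [artanh_tanh] at h
  linarith

end Real

theorem penalty_function_unique_minimizer_general (σm σp : ℝ) (hσ : σm < σp)
    (σbar σhat : ℝ) (hbar : σbar = (σp + σm) / 2) (hhat : σhat = (σp - σm) / 2)
    (δ : ℝ) (hδ : 0 < δ)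
    (ℌ : ℝ → ℝ)
    (hℌ : ∀ σ, ℌ σ = (δ / (2 * σhat)) *
      ((σ - σm) * Real.log ((σ - σm) / σhat) + (σp - σ) * Real.log ((σp - σ) / σhat))) :
    ∀ s : ℝ,
      σbar + σhat * Real.tanh (σhat * s / δ) ∈ Set.Ioo σm σp ∧
      (∀ σ ∈ Set.Ioo σm σp, σ ≠ σbar + σhat * Real.tanh (σhat * s / δ) →
        ℌ (σbar + σhat * Real.tanh (σhat * s / δ))
          - (σbar + σhat * Real.tanh (σhat * s / δ)) * s < ℌ σ - σ * s) := by
  intro s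
  set x := σhat * s / δ with hx
  set σstar := σbar + σhat * tanh x
  have hσhat : 0 < σhat := by linarith
  have hlower : σstar - σm = σhat * (1 + tanh x) := by linear_combination hbar - hhat
  have hupper : σp - σstar = σhat * (1 - tanh x) := by linear_combination -hbar - hhat
  have hlower_pos : 0 < σstar - σm := hlower ▸ mul_pos hσhat (by linarith [neg_one_lt_tanh x])
  have hupper_pos : 0 < σp - σstar := hupper ▸ mul_pos hσhat (by linarith [tanh_lt_one x])
  have hslope : δ / (2 * σhat) * log ((σstar - σm) / (σp - σstar)) = s := by
    rw [hlower, hupper, mul_div_mul_left _ _ hσhat.ne', log_one_add_tanh_div_one_sub_tanh, hx]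
    field_simp
  refine ⟨⟨by linarith, by linarith⟩, fun σ ⟨hσ_gt, hσ_lt⟩ hne => ?_⟩
  have tangent := mul_log_add_mul_log_tangent_lt (sub_pos.2 hσ_gt) (sub_pos.2 hσ_lt) hlower_pos
    hupper_pos hσhat.ne' (by ring) (sub_left_injective.ne hne)
  rw [hℌ, hℌ]
  linear_combination mul_lt_mul_of_pos_left tangent (div_pos hδ (mul_pos two_pos hσhat)) -
    (σ - σstar) * hslope

/-- For every `s ∈ ℝ`, the function `σ ↦ ℌ(σ) − σ·s` attains a unique minimum
over `(σ₋, σ₊)`, and the minimizer is `σ* = σ̄ + σ̂·tanh(σ̂·s/δ)`. -/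
theorem penalty_function_unique_minimizer (σm σp : ℝ) (hσm : 0 < σm) (hσ : σm < σp)
    (σbar σhat : ℝ) (hbar : σbar = (σp + σm) / 2) (hhat : σhat = (σp - σm) / 2)
    (δ : ℝ) (hδ : 0 < δ)
    (ℌ : ℝ → ℝ)
    (hℌ : ∀ σ, ℌ σ = (δ / (2 * σhat)) *
      ((σ - σm) * Real.log ((σ - σm) / σhat) + (σp - σ) * Real.log ((σp - σ) / σhat))) :
    ∀ s : ℝ,
      σbar + σhat * Real.tanh (σhat * s / δ) ∈ Set.Ioo σm σp ∧
      (∀ σ ∈ Set.Ioo σm σp, σ ≠ σbar + σhat * Real.tanh (σhat * s / δ) →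
        ℌ (σbar + σhat * Real.tanh (σhat * s / δ))
          - (σbar + σhat * Real.tanh (σhat * s / δ)) * s < ℌ σ - σ * s) :=
  penalty_function_unique_minimizer_general σm σp hσ σbar σhat hbar hhat δ hδ ℌ hℌ
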